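/- For all integers k ≥ 3 and ℓ ≥ 3, every finite set of at least (ℓ−3)·C(k−1, 2) + k points in the plane contains ℓ collinear points or k points in general position. -/

import Mathlib

noncomputable section

/-- A point in the plane. -/
abbrev Pt : Type := EuclideanSpace ℝ (Fin 2)

noncomputable instance : DecidableEq Pt := Classical.decEq _

/-- A finite point set is in general position if no three of its points are collinear. -/
def GenPos (P : Finset Pt) : Prop :=
  ∀ S ⊆ P, S.card = 3 → ¬ Collinear ℝ (S : Set Pt)

/-- A finite point set is in convex position if every point lies on the boundary
of the convex hull of the set. -/
def ConvexPos (P : Finset Pt) : Prop :=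
  ∀ p ∈ P, p ∈ frontier (convexHull ℝ (P : Set Pt))

/-- `v` is a corner of `P` if removing it changes the convex hull. -/
def IsCornerOf (P : Finset Pt) (v : Pt) : Prop :=
  convexHull ℝ ((P : Set Pt) \ {v}) ≠ convexHull ℝ (P : Set Pt)

/-- A finite point set is in strictly convex position if each of its points is a corner. -/
def StrictConvexPos (P : Finset Pt) : Prop :=
  ∀ v ∈ P, IsCornerOf P v

/-- `P` contains `k` points in convex position. -/
def HasConvex (P : Finset Pt) (k : ℕ) : Prop :=
  ∃ S ⊆ P, S.card = k ∧ ConvexPos S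

/-- `P` contains `k` points in strictly convex position. -/
def HasStrictConvex (P : Finset Pt) (k : ℕ) : Prop :=
  ∃ S ⊆ P, S.card = k ∧ StrictConvexPos S

/-- `P` contains `l` collinear points. -/
def HasCollinear (P : Finset Pt) (l : ℕ) : Prop :=
  ∃ S ⊆ P, S.card = l ∧ Collinear ℝ (S : Set Pt)

/-- The Erdős–Szekeres number: the least `n` such that every finite set of at least `n`
points in general position contains `k` points in convex position. -/
def ES (k : ℕ) : ℕ :=
  sInf {n : ℕ | ∀ P : Finset Pt, GenPos P → n ≤ P.card → HasConvex P k}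

/-- `X` is a `k`-hole of `P`: `k` points of `P` in strictly convex position whose
convex hull contains no other point of `P`. -/
def IsHole (P X : Finset Pt) (k : ℕ) : Prop :=
  X ⊆ P ∧ X.card = k ∧ StrictConvexPos X ∧
    convexHull ℝ (X : Set Pt) ∩ (P : Set Pt) = (X : Set Pt)

/-- `v` and `w` are visible with respect to `P`. -/
def Visible (P : Finset Pt) (v w : Pt) : Prop :=
  v ≠ w ∧ (P : Set Pt) ∩ segment ℝ v w = {v, w}

end

/-! If `S` is a maximal subset of `P` in general position, then every other point of `P` lies on
a line through two points of `S`. Unless `S` already has `k` points, there are at most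
`C(k - 1, 2)` such lines, so by pigeonhole one of them carries more than `l - 3` points of `P \ S`,
hence at least `l` points of `P` together with its two points of `S`. -/

open Finset

theorem Collinear.coe_affineSpan {k V P : Type*} [DivisionRing k] [AddCommGroup V] [Module k V]
    [AddTorsor V P] {s : Set P} (h : Collinear k s) : Collinear k (affineSpan k s : Set P) := by
  rwa [Collinear, ← AffineSubspace.direction, direction_affineSpan]

lemma hasCollinear_of_subset {P S : Finset Pt} {l : ℕ} (hSP : S ⊆ P)
    (hS : Collinear ℝ (S : Set Pt)) (hl : l ≤ S.card) : HasCollinear P l := by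
  obtain ⟨T, hTS, hT⟩ := exists_subset_card_eq hl
  exact ⟨T, hTS.trans hSP, hT, hS.subset (coe_subset.2 hTS)⟩

lemma GenPos.mono {S T : Finset Pt} (hST : S ⊆ T) (hT : GenPos T) : GenPos S :=
  fun X hX hX3 => hT X (hX.trans hST) hX3

lemma exists_maximal_genPos_subset (P : Finset Pt) :
    ∃ S ⊆ P, GenPos S ∧ ∀ p ∈ P \ S, ¬ GenPos (insert p S) := by
  classical
  have hne : (P.powerset.filter GenPos).Nonempty :=
    ⟨∅, mem_filter.2 ⟨empty_mem_powerset P, fun _ hX hX3 => by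
      simp [subset_empty.1 hX] at hX3⟩⟩
  obtain ⟨S, hS, hmax⟩ := exists_max_image _ card hne
  rw [mem_filter, mem_powerset] at hS
  refine ⟨S, hS.1, hS.2, fun p hp hgen => ?_⟩
  rw [mem_sdiff] at hp
  have := hmax (insert p S) (mem_filter.2
    ⟨mem_powerset.2 (insert_subset hp.1 hS.1), hgen⟩)
  rw [card_insert_of_notMem hp.2] at this
  omega

lemma GenPos.exists_pair_mem_affineSpan {S : Finset Pt} {p : Pt} (hS : GenPos S)
    (hp : ¬ GenPos (insert p S)) :
    ∃ e ∈ S.powersetCard 2, p ∈ affineSpan ℝ (e : Set Pt) := by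
  simp only [GenPos, not_forall, not_not] at hp
  obtain ⟨T, hTS, hT3, hTcol⟩ := hp
  have hpT : p ∈ T := by
    by_contra hpT
    exact hS T (fun x hx => (mem_insert.1 (hTS hx)).resolve_left (ne_of_mem_of_not_mem hx hpT))
      hT3 hTcol
  obtain ⟨a, b, hab, hT⟩ : ∃ a b, a ≠ b ∧ T.erase p = {a, b} := by
    rw [← card_eq_two, card_erase_of_mem hpT, hT3]
  have haT : a ∈ T := mem_of_mem_erase (hT ▸ mem_insert_self a {b})
  have hbT : b ∈ T := mem_of_mem_erase (hT ▸ mem_insert_of_mem (mem_singleton_self b))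
  refine ⟨T.erase p, mem_powersetCard.2 ⟨?_, ?_⟩, ?_⟩
  · intro x hx
    exact (mem_insert.1 (hTS (mem_of_mem_erase hx))).resolve_left (ne_of_mem_erase hx)
  · rw [card_erase_of_mem hpT, hT3]
  · rw [hT, coe_pair]
    exact hTcol.mem_affineSpan_of_mem_of_ne haT hbT hpT hab

lemma hasCollinear_of_maximal_genPos {P S : Finset Pt} {l : ℕ} (hSP : S ⊆ P) (hS : GenPos S)
    (hmax : ∀ p ∈ P \ S, ¬ GenPos (insert p S))
    (hcard : S.card.choose 2 * (l - 3) < (P \ S).card) : HasCollinear P l := by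
  choose! f hf using fun p hp => hS.exists_pair_mem_affineSpan (hmax p hp)
  obtain ⟨e, he, hfiber⟩ := exists_lt_card_fiber_of_mul_lt_card_of_maps_to
    (fun p hp => (hf p hp).1) (by rwa [card_powersetCard])
  set F := (P \ S).filter (fun p => f p = e)
  obtain ⟨heS, he2⟩ := mem_powersetCard.1 he
  have hdisj : Disjoint e F := disjoint_left.2 fun x hxe hxF =>
    (mem_sdiff.1 (mem_filter.1 hxF).1).2 (heS hxe)
  refine hasCollinear_of_subset (S := e ∪ F) ?_ ?_ ?_
  · exact union_subset (heS.trans hSP) fun x hx => (mem_sdiff.1 (mem_filter.1 hx).1).1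
  · obtain ⟨a, b, -, rfl⟩ := card_eq_two.1 he2
    refine (collinear_pair ℝ a b).coe_affineSpan.subset ?_
    rw [coe_union, coe_pair, Set.union_subset_iff]
    refine ⟨subset_affineSpan ℝ _, fun x hx => ?_⟩
    obtain ⟨hxPS, hfx⟩ := mem_filter.1 hx
    simpa [hfx] using (hf x hxPS).2
  · rw [card_union_of_disjoint hdisj, he2]
    omega

theorem stmt13_general (k l : ℕ) (P : Finset Pt) (hP : (l - 3) * (k - 1).choose 2 + k ≤ P.card) :
    HasCollinear P l ∨ ∃ S ⊆ P, S.card = k ∧ GenPos S := by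
  obtain ⟨S, hSP, hS, hmax⟩ := exists_maximal_genPos_subset P
  by_cases hkS : k ≤ S.card
  · obtain ⟨T, hTS, hT⟩ := exists_subset_card_eq hkS
    exact Or.inr ⟨T, hTS.trans hSP, hT, hS.mono hTS⟩
  refine Or.inl (hasCollinear_of_maximal_genPos hSP hS hmax ?_)
  have hchoose : S.card.choose 2 ≤ (k - 1).choose 2 := Nat.choose_le_choose 2 (by omega)
  rw [card_sdiff_of_subset hSP]
  calc S.card.choose 2 * (l - 3) ≤ (l - 3) * (k - 1).choose 2 := by
        rw [mul_comm]; exact Nat.mul_le_mul_left _ hchoose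
    _ < P.card - S.card := by omega

theorem stmt13 (k l : ℕ) (hk : 3 ≤ k) (hl : 3 ≤ l)
    (P : Finset Pt) (hP : (l - 3) * (k - 1).choose 2 + k ≤ P.card) :
    HasCollinear P l ∨ ∃ S ⊆ P, S.card = k ∧ GenPos S :=
  stmt13_general k l P hP
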